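/- arXiv:2603.29330 — 2 statements merged into one kernel-verified Lean document; each statement's English description precedes it below -/
import Mathlib

section
/- For all t ≥ T := √(2r²/(9μ)), the derivative of E satisfies E'(t) ≤ − t^{2r/3} · (2r/(3t³)) · ‖x(t) − x_*‖² ≤ 0; in particular E is non-increasing on [T, ∞). -/
open scoped RealInnerProductSpace

/-! Differentiating `E` and eliminating `ẍ` with the equation of motion, the kinetic terms and
the terms `⟪∇f(x), ẋ⟫` cancel, leaving
`E' = t^(2r/3) (2r/(3t) (f(x) - f_* - ⟪∇f(x), x - x_*⟫) + 2(r³ - 9r)/(27t³) ‖x - x_*‖²)`.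
Strong convexity gives `f(x) - f_* - ⟪∇f(x), x - x_*⟫ ≤ -μ/2 ‖x - x_*‖²`, and once
`9μt² ≥ 2r²` this absorbs the `r³` term, which leaves `E' ≤ -t^(2r/3) (2r/(3t³)) ‖x - x_*‖²`. -/

variable {F : Type*} [NormedAddCommGroup F] [InnerProductSpace ℝ F]

theorem HasGradientAt.comp_hasDerivAt [CompleteSpace F] {f : F → ℝ} {g : F} {x : ℝ → F} {v : F}
    {t : ℝ} (hf : HasGradientAt f g (x t)) (hx : HasDerivAt x v t) :
    HasDerivAt (fun τ => f (x τ)) ⟪g, v⟫ t := by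
  have h := hf.hasFDerivAt.comp_hasDerivAt t hx
  simp only [InnerProductSpace.toDual_apply_apply] at h
  exact h

theorem strongConvex_sub_add_le_inner {μ : ℝ} {f : F → ℝ} {f' : F → F}
    (hsc : ∀ p q, f q ≥ f p + ⟪f' p, q - p⟫ + μ / 2 * ‖q - p‖ ^ 2) (p q : F) :
    f p - f q + μ / 2 * ‖p - q‖ ^ 2 ≤ ⟪f' p, p - q⟫ := by
  have h := hsc p q
  rw [← neg_sub p q, inner_neg_right, norm_neg] at h
  linarith

noncomputable def lyapunov (r : ℝ) (f : F → ℝ) (xstar : F) (x x' : ℝ → F) (t : ℝ) : ℝ :=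
  t ^ (2 * r / 3) * (f (x t) - f xstar - (r ^ 2 - 3 * r) / (9 * t ^ 2) * ‖x t - xstar‖ ^ 2)
    + 1 / 2 * t ^ (2 * r / 3) * ‖x' t + (2 * r / (3 * t)) • (x t - xstar)‖ ^ 2

section Derivative

variable {r t : ℝ} {xstar g : F} {x x' x'' : ℝ → F}

theorem hasDerivAt_scaled_velocity (ht : 0 < t) (hx : HasDerivAt x (x' t) t)
    (hx' : HasDerivAt x' (x'' t) t) (hode : x'' t + (r / t) • x' t + g = 0) :
    HasDerivAt (fun τ => x' τ + (2 * r / (3 * τ)) • (x τ - xstar))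
      (-(r / (3 * t)) • x' t - g - (2 * r / (3 * t ^ 2)) • (x t - xstar)) t := by
  have hcoef : HasDerivAt (fun τ => 2 * r / (3 * τ)) (-(2 * r / (3 * t ^ 2))) t :=
    ((hasDerivAt_const t (2 * r)).div ((hasDerivAt_id' t).const_mul 3) (by positivity)).congr_deriv
      (by field_simp; ring)
  have hx'' : x'' t = -(r / t) • x' t - g := by
    rw [← sub_eq_zero, ← hode]
    module
  refine (hx'.add (hcoef.smul (hx.sub_const xstar))).congr_deriv ?_
  rw [hx'']
  module

theorem hasDerivAt_lyapunov [CompleteSpace F] {f : F → ℝ} (ht : 0 < t)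
    (hf : HasGradientAt f g (x t)) (hx : HasDerivAt x (x' t) t) (hx' : HasDerivAt x' (x'' t) t)
    (hode : x'' t + (r / t) • x' t + g = 0) :
    HasDerivAt (lyapunov r f xstar x x')
      (t ^ (2 * r / 3) * (2 * r / (3 * t) * (f (x t) - f xstar - ⟪g, x t - xstar⟫)
        + 2 * (r ^ 3 - 9 * r) / (27 * t ^ 3) * ‖x t - xstar‖ ^ 2)) t := by
  have hpow : HasDerivAt (fun τ : ℝ => τ ^ (2 * r / 3)) (2 * r / 3 * t ^ (2 * r / 3 - 1)) t :=
    Real.hasDerivAt_rpow_const (Or.inl ht.ne')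
  have hcoef : HasDerivAt (fun τ : ℝ => (r ^ 2 - 3 * r) / (9 * τ ^ 2))
      (-(2 * (r ^ 2 - 3 * r) / (9 * t ^ 3))) t :=
    ((hasDerivAt_const t _).div ((hasDerivAt_pow 2 t).const_mul 9) (by positivity)).congr_deriv
      (by field_simp; ring)
  have hdist : HasDerivAt (fun τ => x τ - xstar) (x' t) t := hx.sub_const xstar
  refine ((hpow.mul (((hf.comp_hasDerivAt hx).sub_const (f xstar)).sub
    (hcoef.mul hdist.norm_sq))).add ((hpow.const_mul (1 / 2 : ℝ)).mul
      (hasDerivAt_scaled_velocity ht hx hx' hode).norm_sq)).congr_deriv ?_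
  simp only [Pi.sub_apply, Pi.mul_apply]
  generalize x t - xstar = u
  rw [Real.rpow_sub ht, Real.rpow_one]
  simp only [← real_inner_self_eq_norm_sq, inner_add_left, inner_add_right,
    inner_sub_right, real_inner_smul_left, real_inner_smul_right,
    real_inner_comm (x' t) g, real_inner_comm (x' t) u, real_inner_comm u g]
  field_simp
  ring

end Derivative

theorem lyapunov_deriv_factor_le {μ r t d G N : ℝ} (hr : 0 ≤ r) (ht : 0 < t) (hN : 0 ≤ N)
    (hT : 2 * r ^ 2 ≤ 9 * μ * t ^ 2) (hsc : d + μ / 2 * N ≤ G) :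
    2 * r / (3 * t) * (d - G) + 2 * (r ^ 3 - 9 * r) / (27 * t ^ 3) * N
      ≤ -(2 * r / (3 * t ^ 3)) * N := by
  have key : -(2 * r / (3 * t ^ 3)) * N
      - (2 * r / (3 * t) * (d - G) + 2 * (r ^ 3 - 9 * r) / (27 * t ^ 3) * N)
      = 2 * r / (3 * t) * (G - d - μ / 2 * N)
        + r * N * (9 * μ * t ^ 2 - 2 * r ^ 2) / (27 * t ^ 3) := by
    field_simp
    ring
  rw [← sub_nonneg, key]
  have hgap : 0 ≤ G - d - μ / 2 * N := by linarith
  have hT' : 0 ≤ 9 * μ * t ^ 2 - 2 * r ^ 2 := by linarith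
  positivity

theorem stmt_2_general
{n : ℕ} (μ r : ℝ) (hμ : 0 < μ) (hr : 0 < r)
    (f : EuclideanSpace ℝ (Fin n) → ℝ)
    (f' : EuclideanSpace ℝ (Fin n) → EuclideanSpace ℝ (Fin n))
    (hf' : ∀ p, HasGradientAt f (f' p) p)
    (hsc : ∀ p q, f q ≥ f p + ⟪f' p, q - p⟫ + μ / 2 * ‖q - p‖ ^ 2)
    (xstar : EuclideanSpace ℝ (Fin n))
    (x x' x'' : ℝ → EuclideanSpace ℝ (Fin n))
    (hx : ∀ t > (0:ℝ), HasDerivAt x (x' t) t)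
    (hx' : ∀ t > (0:ℝ), HasDerivAt x' (x'' t) t)
    (hode : ∀ t > (0:ℝ), x'' t + (r / t) • x' t + f' (x t) = 0)
(E : ℝ → ℝ)
    (hE : ∀ t, E t
        = t ^ (2 * r / 3) * (f (x t) - f xstar - (r ^ 2 - 3 * r) / (9 * t ^ 2) * ‖x t - xstar‖ ^ 2)
          + 1 / 2 * t ^ (2 * r / 3) * ‖x' t + (2 * r / (3 * t)) • (x t - xstar)‖ ^ 2) :
    (∀ t, Real.sqrt (2 * r ^ 2 / (9 * μ)) ≤ t →
      deriv E t ≤ -(t ^ (2 * r / 3)) * (2 * r / (3 * t ^ 3)) * ‖x t - xstar‖ ^ 2 ∧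
      -(t ^ (2 * r / 3)) * (2 * r / (3 * t ^ 3)) * ‖x t - xstar‖ ^ 2 ≤ 0) ∧
    AntitoneOn E (Set.Ici (Real.sqrt (2 * r ^ 2 / (9 * μ)))) := by
  set T := Real.sqrt (2 * r ^ 2 / (9 * μ))
  have hT : 0 < T := Real.sqrt_pos.mpr (by positivity)
  have hderiv : ∀ t > 0, HasDerivAt E
      (t ^ (2 * r / 3) * (2 * r / (3 * t) * (f (x t) - f xstar - ⟪f' (x t), x t - xstar⟫)
        + 2 * (r ^ 3 - 9 * r) / (27 * t ^ 3) * ‖x t - xstar‖ ^ 2)) t := fun t ht =>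
    funext hE ▸ hasDerivAt_lyapunov ht (hf' _) (hx t ht) (hx' t ht) (hode t ht)
  have hdecay_nonpos : ∀ t, T ≤ t →
      -(t ^ (2 * r / 3)) * (2 * r / (3 * t ^ 3)) * ‖x t - xstar‖ ^ 2 ≤ 0 := fun t htT => by
    have ht := hT.trans_le htT
    have : 0 ≤ t ^ (2 * r / 3) * (2 * r / (3 * t ^ 3)) * ‖x t - xstar‖ ^ 2 := by positivity
    linarith
  have hderiv_le : ∀ t, T ≤ t →
      deriv E t ≤ -(t ^ (2 * r / 3)) * (2 * r / (3 * t ^ 3)) * ‖x t - xstar‖ ^ 2 := by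
    intro t htT
    have ht := hT.trans_le htT
    have htμ : 2 * r ^ 2 ≤ 9 * μ * t ^ 2 := by
      have := (Real.sqrt_le_left ht.le).mp htT
      rw [div_le_iff₀ (by positivity)] at this
      linarith
    rw [(hderiv t ht).deriv]
    calc _ ≤ t ^ (2 * r / 3) * (-(2 * r / (3 * t ^ 3)) * ‖x t - xstar‖ ^ 2) :=
          mul_le_mul_of_nonneg_left (lyapunov_deriv_factor_le hr.le ht (by positivity) htμ
            (strongConvex_sub_add_le_inner hsc _ _)) (by positivity)
      _ = _ := by ring
  refine ⟨fun t htT => ⟨hderiv_le t htT, hdecay_nonpos t htT⟩, ?_⟩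
  refine antitoneOn_of_deriv_nonpos (convex_Ici T)
    (fun t htT => (hderiv t (hT.trans_le htT)).continuousAt.continuousWithinAt) ?_ ?_ <;>
    rw [interior_Ici]
  · exact fun t htT => (hderiv t (hT.trans htT)).differentiableAt.differentiableWithinAt
  · exact fun t htT => (hderiv_le t htT.le).trans (hdecay_nonpos t htT.le)

/-- Lemma 3 (descent of the Lyapunov function for `ẍ + (r/t)ẋ + ∇f(x) = 0`):
for `t ≥ T := √(2r²/(9μ))`, `E'(t) ≤ -t^(2r/3) * (2r/(3t³)) * ‖x t - x_*‖² ≤ 0`;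
in particular `E` is non-increasing on `[T, ∞)`. -/
theorem stmt_2
{n : ℕ} (μ r : ℝ) (hμ : 0 < μ) (hr : 0 < r)
    (f : EuclideanSpace ℝ (Fin n) → ℝ)
    (f' : EuclideanSpace ℝ (Fin n) → EuclideanSpace ℝ (Fin n))
    (hf' : ∀ p, HasGradientAt f (f' p) p)
    (hsc : ∀ p q, f q ≥ f p + ⟪f' p, q - p⟫ + μ / 2 * ‖q - p‖ ^ 2)
    (xstar : EuclideanSpace ℝ (Fin n)) (hmin : ∀ p, f xstar ≤ f p)
    (x x' x'' : ℝ → EuclideanSpace ℝ (Fin n))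
    (hx : ∀ t > (0:ℝ), HasDerivAt x (x' t) t)
    (hx' : ∀ t > (0:ℝ), HasDerivAt x' (x'' t) t)
    (hode : ∀ t > (0:ℝ), x'' t + (r / t) • x' t + f' (x t) = 0)
(E : ℝ → ℝ)
    (hE : ∀ t, E t
        = t ^ (2 * r / 3) * (f (x t) - f xstar - (r ^ 2 - 3 * r) / (9 * t ^ 2) * ‖x t - xstar‖ ^ 2)
          + 1 / 2 * t ^ (2 * r / 3) * ‖x' t + (2 * r / (3 * t)) • (x t - xstar)‖ ^ 2) :
    (∀ t, Real.sqrt (2 * r ^ 2 / (9 * μ)) ≤ t →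
      deriv E t ≤ -(t ^ (2 * r / 3)) * (2 * r / (3 * t ^ 3)) * ‖x t - xstar‖ ^ 2 ∧
      -(t ^ (2 * r / 3)) * (2 * r / (3 * t ^ 3)) * ‖x t - xstar‖ ^ 2 ≤ 0) ∧
    AntitoneOn E (Set.Ici (Real.sqrt (2 * r ^ 2 / (9 * μ)))) :=
  stmt_2_general μ r hμ hr f f' hf' hsc xstar x x' x'' hx hx' hode E hE
end

section
/- Define y(t) = exp((2/3)·(r/(1−α))·t^{1−α})·(x(t) − x_*). Then for all t > 0, ẏ(t) = exp((2/3)·(r/(1−α))·t^{1−α})·( ẋ(t) + (2/3)·r·t^{−α}·(x(t) − x_*) ), and consequently ‖ẏ(t)‖ ≤ √(2·E(T)) · exp((1/3)·(r/(1−α))·t^{1−α}) for all t ≥ T := (2r²/(9μ))^{1/(2α)}. -/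
open scoped RealInnerProductSpace

open Set

/-!
With `φ(t) = exp((2/3)(r/(1-α)) t^(1-α))` one has `φ' = a φ` for `a(t) = (2/3) r t^(-α)`, so the
formula for `ẏ` is the product rule. Along the flow, `E = φ (f(x) - f_* - β ‖x - x_*‖²)
+ ½ φ ‖ẋ + a (x - x_*)‖²` with `β = a²/4 + ȧ/2` has derivative
`φ a (f(x) - f_* - ⟪∇f(x), x - x_*⟫ + (a²/4 - α(α+1)/(2t²)) ‖x - x_*‖²)`, which strong convexity
makes nonpositive as soon as `a²/4 ≤ μ/2`, i.e. for `t ≥ T`. There also `β ≤ μ/2`, so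
`E(t) ≥ ½ φ ‖ẋ + a (x - x_*)‖² = ‖ẏ‖² / (2φ)`, and `E(t) ≤ E(T)` gives the bound.
-/

section Energy

variable {H : Type*} [NormedAddCommGroup H] [InnerProductSpace ℝ H]

theorem IsLocalMin.hasGradientAt_eq_zero [CompleteSpace H] {f : H → ℝ} {g z : H}
    (h : IsLocalMin f z) (hf : HasGradientAt f g z) : g = 0 :=
  (InnerProductSpace.toDual ℝ H).map_eq_zero_iff.mp (h.hasFDerivAt_eq_zero hf.hasFDerivAt)

theorem hasDerivAt_smul_sub {φ : ℝ → ℝ} {x : ℝ → H} {t a : ℝ} {v : H} (z : H)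
    (hφ : HasDerivAt φ (a * φ t) t) (hx : HasDerivAt x v t) :
    HasDerivAt (fun s => φ s • (x s - z)) (φ t • (v + a • (x t - z))) t :=
  (hφ.smul (hx.sub_const z)).congr_deriv (by rw [smul_add, smul_smul, mul_comm, add_comm])

theorem norm_smul_le_sqrt_mul {φ ψ e : ℝ} {v : H} (hψ : 0 ≤ ψ) (hφ : φ = ψ ^ 2)
    (h : 1 / 2 * φ * ‖v‖ ^ 2 ≤ e) : ‖φ • v‖ ≤ √(2 * e) * ψ := by
  have hsq : (ψ * ‖v‖) ^ 2 ≤ 2 * e := by rw [hφ] at h; linarith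
  calc ‖φ • v‖ = ψ * ‖v‖ * ψ := by rw [hφ, norm_smul, Real.norm_of_nonneg (by positivity)]; ring
    _ ≤ √(2 * e) * ψ := mul_le_mul_of_nonneg_right (Real.le_sqrt_of_sq_le hsq) hψ

noncomputable def energy (φ a β : ℝ → ℝ) (f : H → ℝ) (z : H) (x x' : ℝ → H) (t : ℝ) : ℝ :=
  φ t * (f (x t) - f z - β t * ‖x t - z‖ ^ 2) + 1 / 2 * φ t * ‖x' t + a t • (x t - z)‖ ^ 2

theorem half_mul_norm_sq_le_energy {φ a β : ℝ → ℝ} {f : H → ℝ} {z : H} {x x' : ℝ → H} {t : ℝ}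
    (hφ : 0 ≤ φ t) (hβ : β t * ‖x t - z‖ ^ 2 ≤ f (x t) - f z) :
    1 / 2 * φ t * ‖x' t + a t • (x t - z)‖ ^ 2 ≤ energy φ a β f z x x' t := by
  have := mul_nonneg hφ (sub_nonneg.2 hβ)
  unfold energy
  linarith

theorem hasDerivAt_energy [CompleteSpace H] {φ a β : ℝ → ℝ} {f : H → ℝ} {g z : H}
    {x x' : ℝ → H} {t a' β' : ℝ} (hφ : HasDerivAt φ (a t * φ t) t) (ha : HasDerivAt a a' t)
    (hβ : HasDerivAt β β' t) (hf : HasGradientAt f g (x t)) (hx : HasDerivAt x (x' t) t)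
    (hx' : HasDerivAt x' (-(3 / 2 * a t) • x' t - g) t) (hβa : β t = a t ^ 2 / 4 + a' / 2) :
    HasDerivAt (energy φ a β f z x x')
      (φ t * (a t * (f (x t) - f z - ⟪g, x t - z⟫) + (a t * β t - β') * ‖x t - z‖ ^ 2)) t := by
  have hu : HasDerivAt (fun s => x s - z) (x' t) t := hx.sub_const z
  have hF : HasDerivAt (fun s => f (x s) - f z) ⟪g, x' t⟫ t := by
    simpa using (hf.hasFDerivAt.comp_hasDerivAt t hx).sub_const (f z)
  have hv : HasDerivAt (fun s => x' s + a s • (x s - z))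
      (-(3 / 2 * a t) • x' t - g + (a t • x' t + a' • (x t - z))) t := hx'.add (ha.smul hu)
  refine ((hφ.mul (hF.sub (hβ.mul hu.norm_sq))).add
    ((hφ.const_mul (1 / 2)).mul hv.norm_sq)).congr_deriv ?_
  simp only [Pi.sub_apply, Pi.mul_apply]
  generalize x t - z = u, x' t = w
  simp only [← real_inner_self_eq_norm_sq, inner_add_left, inner_add_right, inner_sub_right,
    real_inner_smul_left, real_inner_smul_right, real_inner_comm g]
  rw [real_inner_comm u w]
  -- `β = a²/4 + ȧ/2` is exactly what cancels the cross terms `⟪x - z, ẋ⟫`.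
  linear_combination -2 * φ t * (a t * ⟪u, u⟫ + ⟪u, w⟫) * hβa

end Energy

section Schedule

variable {r α t : ℝ}

noncomputable def expWeight (r α t : ℝ) : ℝ := Real.exp (2 / 3 * (r / (1 - α)) * t ^ (1 - α))

noncomputable def expRate (r α t : ℝ) : ℝ := 2 / 3 * r * t ^ (-α)

noncomputable def quadCoeff (r α t : ℝ) : ℝ := (r ^ 2 * t ^ (-α) - 3 * r * α * t⁻¹) / (9 * t ^ α)

theorem hasDerivAt_expWeight (hα : α ≠ 1) (ht : 0 < t) :
    HasDerivAt (expWeight r α) (expRate r α t * expWeight r α t) t := by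
  have hpow := Real.hasDerivAt_rpow_const (p := 1 - α) (Or.inl ht.ne')
  refine ((hpow.const_mul (2 / 3 * (r / (1 - α)))).exp).congr_deriv ?_
  have : 1 - α ≠ 0 := sub_ne_zero.2 hα.symm
  rw [expWeight, expRate, sub_sub_cancel_left]
  field_simp

theorem hasDerivAt_expRate (ht : 0 < t) :
    HasDerivAt (expRate r α) (-(α * expRate r α t / t)) t := by
  refine ((Real.hasDerivAt_rpow_const (p := -α) (Or.inl ht.ne')).const_mul (2 / 3 * r)).congr_deriv ?_
  rw [expRate, Real.rpow_sub ht, Real.rpow_one]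
  ring

theorem quadCoeff_eq (ht : 0 < t) :
    quadCoeff r α t = expRate r α t ^ 2 / 4 - α * expRate r α t / (2 * t) := by
  rw [quadCoeff, expRate, Real.rpow_neg ht.le]
  have : 0 < t ^ α := Real.rpow_pos_of_pos ht α
  field_simp
  ring

theorem hasDerivAt_quadCoeff (ht : 0 < t) :
    HasDerivAt (quadCoeff r α)
      (expRate r α t * (quadCoeff r α t - expRate r α t ^ 2 / 4 + α * (α + 1) / (2 * t ^ 2))) t := by
  have ha := hasDerivAt_expRate (r := r) (α := α) ht
  have heq : quadCoeff r α =ᶠ[nhds t] fun s => expRate r α s ^ 2 / 4 - α * expRate r α s / (2 * s) :=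
    Filter.eventually_of_mem (Ioi_mem_nhds ht) fun s hs => quadCoeff_eq hs
  refine heq.hasDerivAt_iff.mpr (((ha.pow 2).div_const 4).sub
    ((ha.const_mul α).div ((hasDerivAt_id t).const_mul 2) (by positivity))) |>.congr_deriv ?_
  rw [quadCoeff_eq ht]
  field_simp
  ring

theorem expRate_sq_le {μ : ℝ} (hμ : 0 < μ) (hα : 0 < α) (ht : 0 < t)
    (hT : (2 * r ^ 2 / (9 * μ)) ^ (1 / (2 * α)) ≤ t) : expRate r α t ^ 2 / 4 ≤ μ / 2 := by
  have hpow : 2 * r ^ 2 / (9 * μ) ≤ t ^ (2 * α) := by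
    calc 2 * r ^ 2 / (9 * μ) = ((2 * r ^ 2 / (9 * μ)) ^ (1 / (2 * α))) ^ (2 * α) := by
          rw [← Real.rpow_mul (by positivity), one_div_mul_cancel (by positivity), Real.rpow_one]
      _ ≤ t ^ (2 * α) := Real.rpow_le_rpow (by positivity) hT (by positivity)
  have hsq : (t ^ (-α)) ^ 2 = (t ^ (2 * α))⁻¹ := by
    rw [← Real.rpow_natCast, ← Real.rpow_mul ht.le, ← Real.rpow_neg ht.le]
    ring_nf
  have htpos : 0 < t ^ (2 * α) := Real.rpow_pos_of_pos ht _
  rw [div_le_iff₀ (by positivity)] at hpow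
  rw [expRate, mul_pow, hsq]
  field_simp
  linarith

theorem quadCoeff_le {μ : ℝ} (hμ : 0 < μ) (hr : 0 < r) (hα : 0 < α) (ht : 0 < t)
    (hT : (2 * r ^ 2 / (9 * μ)) ^ (1 / (2 * α)) ≤ t) : quadCoeff r α t ≤ μ / 2 := by
  have ha : 0 ≤ expRate r α t := by unfold expRate; positivity
  rw [quadCoeff_eq ht]
  have := expRate_sq_le hμ hα ht hT
  have : 0 ≤ α * expRate r α t / (2 * t) := by positivity
  linarith

end Schedule

section Flow

variable {H : Type*} [NormedAddCommGroup H] [InnerProductSpace ℝ H] [CompleteSpace H]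
  {μ r α t : ℝ} {f : H → ℝ} {f' : H → H} {z : H} {x x' x'' : ℝ → H}

theorem hasDerivAt_energy_of_ode (hα : α ≠ 1) (ht : 0 < t) (hf : HasGradientAt f (f' (x t)) (x t))
    (hx : HasDerivAt x (x' t) t) (hx' : HasDerivAt x' (x'' t) t)
    (hode : x'' t + (r / t ^ α) • x' t + f' (x t) = 0) :
    HasDerivAt (energy (expWeight r α) (expRate r α) (quadCoeff r α) f z x x')
      (expWeight r α t * expRate r α t * (f (x t) - f z - ⟪f' (x t), x t - z⟫
        + (expRate r α t ^ 2 / 4 - α * (α + 1) / (2 * t ^ 2)) * ‖x t - z‖ ^ 2)) t := by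
  have hdamp : 3 / 2 * expRate r α t = r / t ^ α := by
    rw [expRate, Real.rpow_neg ht.le]; ring
  have hx'' : HasDerivAt x' (-(3 / 2 * expRate r α t) • x' t - f' (x t)) t := by
    convert hx' using 1
    rw [hdamp, neg_smul, ← add_eq_zero_iff_eq_neg.mp (by rwa [add_right_comm] at hode)]
    abel
  refine (hasDerivAt_energy (hasDerivAt_expWeight hα ht) (hasDerivAt_expRate ht)
    (hasDerivAt_quadCoeff ht) hf hx hx'' ?_).congr_deriv (by ring)
  rw [quadCoeff_eq ht]
  ring

theorem antitoneOn_energy (hμ : 0 < μ) (hr : 0 < r) (hα0 : 0 < α) (hα1 : α < 1)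
    (hf : ∀ p, HasGradientAt f (f' p) p)
    (hsc : ∀ p q, f q ≥ f p + ⟪f' p, q - p⟫ + μ / 2 * ‖q - p‖ ^ 2)
    (hx : ∀ t > 0, HasDerivAt x (x' t) t) (hx' : ∀ t > 0, HasDerivAt x' (x'' t) t)
    (hode : ∀ t > 0, x'' t + (r / t ^ α) • x' t + f' (x t) = 0) :
    AntitoneOn (energy (expWeight r α) (expRate r α) (quadCoeff r α) f z x x')
      (Ici ((2 * r ^ 2 / (9 * μ)) ^ (1 / (2 * α)))) := by
  have hT : 0 < (2 * r ^ 2 / (9 * μ)) ^ (1 / (2 * α)) := by positivity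
  have hderiv : ∀ t ∈ Ici ((2 * r ^ 2 / (9 * μ)) ^ (1 / (2 * α))), HasDerivAt _ _ t := fun t ht =>
    hasDerivAt_energy_of_ode hα1.ne (hT.trans_le ht) (hf (x t)) (hx t (hT.trans_le ht))
      (hx' t (hT.trans_le ht)) (hode t (hT.trans_le ht)) (z := z)
  refine antitoneOn_of_hasDerivWithinAt_nonpos (convex_Ici _)
    (fun t ht => (hderiv t ht).continuousAt.continuousWithinAt)
    (fun t ht => (hderiv t (interior_subset ht)).hasDerivWithinAt) fun t ht => ?_
  rw [interior_Ici] at ht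
  have ht0 : 0 < t := hT.trans ht
  have hconv : f (x t) - f z - ⟪f' (x t), x t - z⟫ ≤ -(μ / 2 * ‖x t - z‖ ^ 2) := by
    have := hsc (x t) z
    rw [← neg_sub (x t) z, inner_neg_right, norm_neg] at this
    linarith
  have hrate := mul_le_mul_of_nonneg_right (expRate_sq_le hμ hα0 ht0 ht.le) (sq_nonneg ‖x t - z‖)
  have hcurv : 0 ≤ α * (α + 1) / (2 * t ^ 2) * ‖x t - z‖ ^ 2 := by positivity
  have hw : 0 ≤ expWeight r α t * expRate r α t := by
    unfold expWeight expRate; positivity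
  exact mul_nonpos_of_nonneg_of_nonpos hw (by linarith)

end Flow

/-- Equations (32)–(33) in the proof of Lemma 9: with
`y t = exp((2/3)(r/(1-α)) t^(1-α)) • (x t - x_*)`,
`ẏ(t) = exp((2/3)(r/(1-α)) t^(1-α)) • (ẋ(t) + (2/3) r t^(-α) • (x t - x_*))` for `t > 0`,
and `‖ẏ(t)‖ ≤ √(2 E(T)) exp((1/3)(r/(1-α)) t^(1-α))` for `t ≥ T := (2r²/(9μ))^(1/(2α))`. -/
theorem stmt_15
{n : ℕ} (μ r α : ℝ) (hμ : 0 < μ) (hr : 0 < r) (hα0 : 0 < α) (hα1 : α < 1)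
    (f : EuclideanSpace ℝ (Fin n) → ℝ)
    (f' : EuclideanSpace ℝ (Fin n) → EuclideanSpace ℝ (Fin n))
    (hf' : ∀ p, HasGradientAt f (f' p) p)
    (hsc : ∀ p q, f q ≥ f p + ⟪f' p, q - p⟫ + μ / 2 * ‖q - p‖ ^ 2)
    (xstar : EuclideanSpace ℝ (Fin n)) (hmin : ∀ p, f xstar ≤ f p)
    (x x' x'' : ℝ → EuclideanSpace ℝ (Fin n))
    (hx : ∀ t > (0:ℝ), HasDerivAt x (x' t) t)
    (hx' : ∀ t > (0:ℝ), HasDerivAt x' (x'' t) t)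
    (hode : ∀ t > (0:ℝ), x'' t + (r / t ^ α) • x' t + f' (x t) = 0)
(E : ℝ → ℝ)
    (hE : ∀ t, E t
        = Real.exp (2 / 3 * (r / (1 - α)) * t ^ (1 - α))
            * (f (x t) - f xstar
                - (r ^ 2 * t ^ (-α) - 3 * r * α * t⁻¹) / (9 * t ^ α) * ‖x t - xstar‖ ^ 2)
          + 1 / 2 * Real.exp (2 / 3 * (r / (1 - α)) * t ^ (1 - α))
            * ‖x' t + (2 / 3 * r * t ^ (-α)) • (x t - xstar)‖ ^ 2) :
    (∀ t > (0:ℝ), HasDerivAt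
      (fun s : ℝ => Real.exp (2 / 3 * (r / (1 - α)) * s ^ (1 - α)) • (x s - xstar))
      (Real.exp (2 / 3 * (r / (1 - α)) * t ^ (1 - α))
        • (x' t + (2 / 3 * r * t ^ (-α)) • (x t - xstar))) t) ∧
    (∀ t, (2 * r ^ 2 / (9 * μ)) ^ (1 / (2 * α)) ≤ t →
      ‖Real.exp (2 / 3 * (r / (1 - α)) * t ^ (1 - α))
          • (x' t + (2 / 3 * r * t ^ (-α)) • (x t - xstar))‖
        ≤ Real.sqrt (2 * E ((2 * r ^ 2 / (9 * μ)) ^ (1 / (2 * α)))) * Real.exp (1 / 3 * (r / (1 - α)) * t ^ (1 - α))) := by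
  refine ⟨fun t ht => hasDerivAt_smul_sub xstar (hasDerivAt_expWeight hα1.ne ht) (hx t ht),
    fun t htT => ?_⟩
  have ht : 0 < t := lt_of_lt_of_le (by positivity) htT
  have hgrad : f' xstar = 0 :=
    IsLocalMin.hasGradientAt_eq_zero (Filter.Eventually.of_forall hmin) (hf' xstar)
  have hβ : quadCoeff r α t * ‖x t - xstar‖ ^ 2 ≤ f (x t) - f xstar := by
    have := hsc xstar (x t)
    rw [hgrad, inner_zero_left] at this
    calc quadCoeff r α t * ‖x t - xstar‖ ^ 2 ≤ μ / 2 * ‖x t - xstar‖ ^ 2 :=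
          mul_le_mul_of_nonneg_right (quadCoeff_le hμ hr hα0 ht htT) (sq_nonneg _)
      _ ≤ f (x t) - f xstar := by linarith
  have hdecay := antitoneOn_energy (z := xstar) hμ hr hα0 hα1 hf' hsc hx hx' hode
    self_mem_Ici htT htT
  have hlow := half_mul_norm_sq_le_energy (φ := expWeight r α) (a := expRate r α) (x' := x')
    (Real.exp_pos _).le hβ
  rw [show E = energy (expWeight r α) (expRate r α) (quadCoeff r α) f xstar x x' from funext hE]
  refine norm_smul_le_sqrt_mul (φ := expWeight r α t) (Real.exp_pos _).le ?_ (hlow.trans hdecay)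
  rw [expWeight, ← Real.exp_nat_mul]
  ring_nf
end
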